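/- The function N_E ↦ I(N_E) is strictly decreasing on [0,∞); this follows because N_E ↦ b_E^I N_E − b_I^I N_I(N_E) is strictly increasing (a consequence of the derivative bound 0 < N_I'(N_E) < b_E^I/b_I^I) and the integrand of I is strictly decreasing in this quantity. -/

import Mathlib

/-- K(w_R, w_F) := ∫_0^∞ (e^{-s²/2}/s)(e^{s·w_F} − e^{s·w_R}) ds (Lebesgue integral on (0,∞)). -/
noncomputable def K (wR wF : ℝ) : ℝ :=
  ∫ s in Set.Ioi (0 : ℝ), Real.exp (-s ^ 2 / 2) / s * (Real.exp (s * wF) - Real.exp (s * wR))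

/-- I₂(N_E,N_I) with V_0^I(N_E,N_I) := b_E^I N_E − b_I^I N_I + (b_E^I − b_E^E) ν_{E,ext}. -/
noncomputable def I2 (VR VF bEE bEI bII aI ν NE NI : ℝ) : ℝ :=
  K ((VR - (bEI * NE - bII * NI + (bEI - bEE) * ν)) / Real.sqrt aI)
    ((VF - (bEI * NE - bII * NI + (bEI - bEE) * ν)) / Real.sqrt aI)

/-- I(N_E) := ∫_0^∞ e^{-s²/2} · exp(−(b_E^I N_E − b_I^I N_I(N_E) + (b_E^I − b_E^E)ν)s/√a_I)
· (e^{s V_F/√a_I} − e^{s V_R/√a_I}) ds, where N_I(·) is the implicitly defined function. -/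
noncomputable def Ifun (VR VF bEE bEI bII aI ν : ℝ) (NIfun : ℝ → ℝ) (NE : ℝ) : ℝ :=
  ∫ s in Set.Ioi (0 : ℝ),
    Real.exp (-s ^ 2 / 2) *
      Real.exp (-((bEI * NE - bII * NIfun NE + (bEI - bEE) * ν) * s) / Real.sqrt aI) *
      (Real.exp (s * VF / Real.sqrt aI) - Real.exp (s * VR / Real.sqrt aI))

/-! Both `I₂` and `I` see `N_E` only through the drift `V_0^I = b_E^I N_E − b_I^I N_I(N_E) + const`,
and raising the drift shifts both arguments of `K` down by the same amount, which can only lower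
`I₂`. Hence the drift is strictly increasing: if it did not increase from `x` to `y > x`, then
`I₂`, and with it `1 / N_I = τ_I + I₂`, would not decrease, so `N_I(y) ≤ N_I(x)` and
`b_E^I y − b_I^I N_I(y) > b_E^I x − b_I^I N_I(x)` after all. The integrand of `I` is pointwise
strictly decreasing in the drift, so `I` is strictly decreasing in `N_E`. -/

open MeasureTheory Set Real

lemma integrable_exp_neg_mul_sq_add_mul {b : ℝ} (hb : 0 < b) (c : ℝ) :
    Integrable fun x : ℝ => exp (-b * x ^ 2 + c * x) := by
  refine (((integrable_exp_neg_mul_sq hb).comp_sub_right (c / (2 * b))).const_mul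
    (exp (c ^ 2 / (4 * b)))).congr (Filter.Eventually.of_forall fun x => ?_)
  simp only [← exp_add]
  congr 1
  field_simp
  ring

lemma exp_sub_exp_le_mul_exp (a b : ℝ) : exp a - exp b ≤ (a - b) * exp a := by
  have hb : exp b = exp (b - a) * exp a := by rw [← exp_add, sub_add_cancel]
  nlinarith [add_one_le_exp (b - a), exp_pos a]

lemma integrableOn_K_integrand {wR wF : ℝ} (h : wR ≤ wF) :
    IntegrableOn (fun s : ℝ => exp (-s ^ 2 / 2) / s * (exp (s * wF) - exp (s * wR))) (Ioi 0) := by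
  refine Integrable.mono'
    (((integrable_exp_neg_mul_sq_add_mul one_half_pos wF).const_mul (wF - wR)).integrableOn)
    (by fun_prop) ?_
  filter_upwards [ae_restrict_mem measurableSet_Ioi] with s (hs : 0 < s)
  have hle : s * wR ≤ s * wF := mul_le_mul_of_nonneg_left h hs.le
  rw [norm_of_nonneg (mul_nonneg (by positivity) (sub_nonneg.2 (exp_le_exp.2 hle)))]
  calc exp (-s ^ 2 / 2) / s * (exp (s * wF) - exp (s * wR))
      ≤ exp (-s ^ 2 / 2) / s * ((s * wF - s * wR) * exp (s * wF)) :=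
        mul_le_mul_of_nonneg_left (exp_sub_exp_le_mul_exp _ _) (by positivity)
    _ = (wF - wR) * exp (-(1 / 2) * s ^ 2 + wF * s) := by
        rw [show -(1 / 2) * s ^ 2 + wF * s = -s ^ 2 / 2 + s * wF by ring, exp_add]
        field_simp

lemma K_le_K_add {wR wF δ : ℝ} (h : wR ≤ wF) (hδ : 0 ≤ δ) : K wR wF ≤ K (wR + δ) (wF + δ) := by
  refine setIntegral_mono_on (integrableOn_K_integrand h)
    (integrableOn_K_integrand (by linarith)) measurableSet_Ioi fun s (hs : 0 < s) => ?_
  have hshift : exp (s * (wF + δ)) - exp (s * (wR + δ)) =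
      exp (s * δ) * (exp (s * wF) - exp (s * wR)) := by
    rw [mul_sub, ← exp_add, ← exp_add]
    ring_nf
  rw [hshift, mul_left_comm]
  refine le_mul_of_one_le_left (mul_nonneg (by positivity) ?_) (one_le_exp (by positivity))
  exact sub_nonneg.2 (exp_le_exp.2 (mul_le_mul_of_nonneg_left h hs.le))

lemma antitone_K_sub_div {VR VF c : ℝ} (hV : VR ≤ VF) (hc : 0 ≤ c) :
    Antitone fun v => K ((VR - v) / c) ((VF - v) / c) := by
  intro v v' hv
  have key := K_le_K_add (div_le_div_of_nonneg_right (sub_le_sub_right hV v') hc)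
    (div_nonneg (sub_nonneg.2 hv) hc)
  simp only [← add_div, sub_add_sub_cancel] at key
  exact key

lemma le_of_mul_eq_one_of_mul_eq_one {α : Type*} [Field α] [LinearOrder α] [IsStrictOrderedRing α]
    {n₁ n₂ a₁ a₂ : α} (hn₁ : 0 < n₁) (h₁ : n₁ * a₁ = 1) (h₂ : n₂ * a₂ = 1) (ha : a₁ ≤ a₂) :
    n₂ ≤ n₁ := by
  have ha₁ : 0 < a₁ := pos_of_mul_pos_right (h₁ ▸ one_pos) hn₁.le
  rw [eq_inv_of_mul_eq_one_left h₁, eq_inv_of_mul_eq_one_left h₂]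
  exact inv_anti₀ ha₁ ha

/-- The mean input `V_0^I(N_E, N_I)` of the inhibitory population. -/
def driftI (bEE bEI bII ν NE NI : ℝ) : ℝ := bEI * NE - bII * NI + (bEI - bEE) * ν

lemma strictMonoOn_driftI {VR VF bEE bEI bII τI aI ν : ℝ} (hV : VR ≤ VF) (hbEI : 0 < bEI)
    (hbII : 0 ≤ bII) {NIfun : ℝ → ℝ}
    (hNIfun : ∀ NE : ℝ, 0 ≤ NE → 0 < NIfun NE ∧
      NIfun NE * (τI + I2 VR VF bEE bEI bII aI ν NE (NIfun NE)) = 1) :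
    StrictMonoOn (fun NE => driftI bEE bEI bII ν NE (NIfun NE)) (Ici 0) := by
  intro x hx y hy hxy
  by_contra! hdrift
  have hI2 : I2 VR VF bEE bEI bII aI ν x (NIfun x) ≤ I2 VR VF bEE bEI bII aI ν y (NIfun y) :=
    antitone_K_sub_div hV (sqrt_nonneg aI) hdrift
  have hNI : NIfun y ≤ NIfun x := le_of_mul_eq_one_of_mul_eq_one (hNIfun x hx).1
    (hNIfun x hx).2 (hNIfun y hy).2 (by gcongr)
  have hexc : bEI * x < bEI * y := mul_lt_mul_of_pos_left hxy hbEI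
  have hinh : bII * NIfun y ≤ bII * NIfun x := mul_le_mul_of_nonneg_left hNI hbII
  simp only [driftI] at hdrift
  linarith

lemma setIntegral_lt_setIntegral_of_forall_lt {X : Type*} [MeasurableSpace X] {μ : Measure X}
    {s : Set X} {f g : X → ℝ} (hs : MeasurableSet s) (hμs : μ s ≠ 0) (hf : IntegrableOn f s μ)
    (hg : IntegrableOn g s μ) (hfg : ∀ x ∈ s, f x < g x) :
    ∫ x in s, f x ∂μ < ∫ x in s, g x ∂μ := by
  rw [← sub_pos, ← integral_sub hg hf]
  have hpos : ∀ x ∈ s, 0 < g x - f x := fun x hx => sub_pos.2 (hfg x hx)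
  rw [setIntegral_pos_iff_support_of_nonneg_ae
    ((ae_restrict_iff' hs).2 (Filter.Eventually.of_forall fun x hx => (hpos x hx).le)) (hg.sub hf)]
  refine pos_iff_ne_zero.2 fun h => hμs (measure_mono_null ?_ h)
  exact fun x hx => ⟨(hpos x hx).ne', hx⟩

/-- `Ifun` as a function of the drift `v = V_0^I`, with `c = √a_I`. -/
noncomputable def ifunOfDrift (VR VF c v : ℝ) : ℝ :=
  ∫ s in Ioi (0 : ℝ), exp (-s ^ 2 / 2) * exp (-(v * s) / c) * (exp (s * VF / c) - exp (s * VR / c))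

lemma strictAnti_ifunOfDrift {VR VF c : ℝ} (hV : VR < VF) (hc : 0 < c) :
    StrictAnti (ifunOfDrift VR VF c) := by
  have hint : ∀ v, IntegrableOn (fun s : ℝ =>
      exp (-s ^ 2 / 2) * exp (-(v * s) / c) * (exp (s * VF / c) - exp (s * VR / c))) (Ioi 0) := by
    intro v
    have := hc.ne'
    refine ((integrable_exp_neg_mul_sq_add_mul one_half_pos ((VF - v) / c)).sub
      (integrable_exp_neg_mul_sq_add_mul one_half_pos ((VR - v) / c))).integrableOn.congr_fun
      (fun s _ => ?_) measurableSet_Ioi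
    simp only [Pi.sub_apply, mul_sub, ← exp_add]
    congr 2 <;> · field_simp; ring
  intro v v' hv
  refine setIntegral_lt_setIntegral_of_forall_lt measurableSet_Ioi (by simp) (hint v') (hint v)
    fun s (hs : 0 < s) => ?_
  have hspread : 0 < exp (s * VF / c) - exp (s * VR / c) :=
    sub_pos.2 (exp_lt_exp.2 (div_lt_div_of_pos_right (mul_lt_mul_of_pos_left hV hs) hc))
  have hdecay : exp (-(v' * s) / c) < exp (-(v * s) / c) :=
    exp_lt_exp.2 (div_lt_div_of_pos_right (neg_lt_neg (mul_lt_mul_of_pos_right hv hs)) hc)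
  exact mul_lt_mul_of_pos_right (mul_lt_mul_of_pos_left hdecay (exp_pos _)) hspread

theorem Ifun_strictAnti_general (VR VF bEE bEI bII τI aI ν : ℝ)
    (hV : VR < VF) (hbEI : 0 < bEI) (hbII : 0 < bII)
    (haI : 0 < aI)
    (NIfun : ℝ → ℝ)
    (hNIfun : ∀ NE : ℝ, 0 ≤ NE → NIfun NE ∈ Set.Ioo 0 (1 / τI) ∧
      NIfun NE * (τI + I2 VR VF bEE bEI bII aI ν NE (NIfun NE)) = 1) :
    StrictAntiOn (Ifun VR VF bEE bEI bII aI ν NIfun) (Set.Ici 0) :=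
  (strictAnti_ifunOfDrift hV (sqrt_pos.2 haI)).comp_strictMonoOn
    (strictMonoOn_driftI hV.le hbEI hbII.le fun NE hNE => ⟨(hNIfun NE hNE).1.1, (hNIfun NE hNE).2⟩)

theorem Ifun_strictAnti (VR VF bEE bIE bEI bII τI aE aI ν : ℝ)
    (hV : VR < VF) (hbEE : 0 < bEE) (hbIE : 0 < bIE) (hbEI : 0 < bEI) (hbII : 0 < bII)
    (hτI : 0 < τI) (haE : 0 < aE) (haI : 0 < aI) (hν : 0 ≤ ν)
    (NIfun : ℝ → ℝ)
    (hNIfun : ∀ NE : ℝ, 0 ≤ NE → NIfun NE ∈ Set.Ioo 0 (1 / τI) ∧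
      NIfun NE * (τI + I2 VR VF bEE bEI bII aI ν NE (NIfun NE)) = 1) :
    StrictAntiOn (Ifun VR VF bEE bEI bII aI ν NIfun) (Set.Ici 0) :=
  Ifun_strictAnti_general VR VF bEE bEI bII τI aI ν hV hbEI hbII haI NIfun hNIfun
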